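/- Let A and B be self-adjoint operators on a finite-dimensional complex inner product space (or bounded self-adjoint operators with trace-class exponentials). Define the Gibbs expectation ⟨X⟩_C = trace(X e^{C}) / trace(e^{C}). Then ⟨A - B⟩_B ≤ log trace(e^A) − log trace(e^B) ≤ ⟨A - B⟩_A. -/

import Mathlib

/-!
Conjugating both matrices by the unitary that diagonalizes `B` changes none of the quantities
involved, so we may take `B = diag d`. Then `⟨A - B⟩_B = ∑ pᵢ (Aᵢᵢ - dᵢ)` for the Gibbs weights
`pᵢ = e^{dᵢ} / ∑ⱼ e^{dⱼ}`, and Jensen's inequality for `exp` bounds its exponential by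
`∑ᵢ e^{Aᵢᵢ} / tr e^B`. Peierls' inequality `∑ᵢ e^{Aᵢᵢ} ≤ tr e^A` (Jensen again, in an eigenbasis
of `A`) gives the lower bound; the upper bound is the lower bound with `A` and `B` exchanged.
-/

open Matrix Unitary

theorem Real.sum_sub_mul_exp_div_le_log_sum_exp_sub {ι : Type*} [Fintype ι] [Nonempty ι]
    (m d : ι → ℝ) :
    (∑ i, (m i - d i) * exp (d i)) / ∑ i, exp (d i) ≤
      log (∑ i, exp (m i)) - log (∑ i, exp (d i)) := by
  set Z := ∑ i, exp (d i)
  have hZ : 0 < Z := Finset.sum_pos (fun i _ => exp_pos _) Finset.univ_nonempty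
  have hm : 0 < ∑ i, exp (m i) := Finset.sum_pos (fun i _ => exp_pos _) Finset.univ_nonempty
  have jensen := convexOn_exp.map_sum_le (t := Finset.univ) (w := fun i => exp (d i) / Z)
    (p := fun i => m i - d i) (fun i _ => by positivity)
    (by rw [← Finset.sum_div, div_self hZ.ne']) (fun i _ => Set.mem_univ _)
  have hmean : ∑ i, (exp (d i) / Z) • (m i - d i) = (∑ i, (m i - d i) * exp (d i)) / Z := by
    rw [Finset.sum_div]
    exact Finset.sum_congr rfl fun i _ => by rw [smul_eq_mul]; ring
  have hexp : ∑ i, (exp (d i) / Z) • exp (m i - d i) = (∑ i, exp (m i)) / Z := by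
    rw [Finset.sum_div]
    exact Finset.sum_congr rfl fun i _ => by rw [smul_eq_mul, exp_sub]; field_simp
  rw [hmean, hexp] at jensen
  rw [← log_div hm.ne' hZ.ne']
  exact (le_log_iff_exp_le (by positivity)).mpr jensen

namespace Matrix

variable {ι : Type*} [Fintype ι] [DecidableEq ι]

theorem exp_conjStarAlgAut (U : unitaryGroup ι ℂ) (X : Matrix ι ι ℂ) :
    NormedSpace.exp (conjStarAlgAut ℂ _ U X) = conjStarAlgAut ℂ _ U (NormedSpace.exp X) := by
  have hU : (U : Matrix ι ι ℂ)⁻¹ = star (U : Matrix ι ι ℂ) :=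
    inv_eq_left_inv (coe_star_mul_self U)
  simpa only [conjStarAlgAut_apply, hU] using
    exp_conj (U : Matrix ι ι ℂ) X (Unitary.toUnits U).isUnit

theorem trace_conjStarAlgAut (U : unitaryGroup ι ℂ) (X : Matrix ι ι ℂ) :
    (conjStarAlgAut ℂ _ U X).trace = X.trace := by
  rw [conjStarAlgAut_apply, trace_mul_cycle, coe_star_mul_self, one_mul]

theorem exp_diagonal_ofReal (d : ι → ℝ) :
    NormedSpace.exp (diagonal fun i => (d i : ℂ)) = diagonal fun i => (Real.exp (d i) : ℂ) := by
  rw [exp_diagonal]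
  congr 1
  funext i
  rw [Pi.exp_def, Complex.ofReal_exp, Complex.exp_eq_exp_ℂ]

theorem IsHermitian.exp_eq {A : Matrix ι ι ℂ} (hA : A.IsHermitian) :
    NormedSpace.exp A = conjStarAlgAut ℂ _ hA.eigenvectorUnitary
      (diagonal fun j => (Real.exp (hA.eigenvalues j) : ℂ)) := by
  conv_lhs => rw [hA.spectral_theorem]
  rw [exp_conjStarAlgAut]
  exact congrArg _ (exp_diagonal_ofReal _)

theorem re_conjStarAlgAut_diagonal_apply_self (U : unitaryGroup ι ℂ) (e : ι → ℝ) (i : ι) :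
    (conjStarAlgAut ℂ _ U (diagonal fun j => (e j : ℂ)) i i).re =
      ∑ j, Complex.normSq ((U : Matrix ι ι ℂ) i j) * e j := by
  rw [conjStarAlgAut_apply, mul_apply, Complex.re_sum]
  refine Finset.sum_congr rfl fun j _ => ?_
  rw [mul_diagonal, star_apply, Complex.star_def, mul_right_comm, Complex.mul_conj,
    ← Complex.ofReal_mul, Complex.ofReal_re]

theorem sum_normSq_apply_eq_one (U : unitaryGroup ι ℂ) (i : ι) :
    ∑ j, Complex.normSq ((U : Matrix ι ι ℂ) i j) = 1 := by
  simpa [diagonal_one] using (re_conjStarAlgAut_diagonal_apply_self U (fun _ => 1) i).symm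

theorem IsHermitian.exp_re_apply_self_le {A : Matrix ι ι ℂ} (hA : A.IsHermitian) (i : ι) :
    Real.exp (A i i).re ≤ (NormedSpace.exp A i i).re := by
  set U := hA.eigenvectorUnitary
  have hA_ii : (A i i).re = ∑ j, Complex.normSq ((U : Matrix ι ι ℂ) i j) * hA.eigenvalues j := by
    conv_lhs => rw [hA.spectral_theorem]
    exact re_conjStarAlgAut_diagonal_apply_self U _ i
  rw [hA_ii, hA.exp_eq, re_conjStarAlgAut_diagonal_apply_self]
  simpa only [smul_eq_mul] using convexOn_exp.map_sum_le (fun j _ => Complex.normSq_nonneg _)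
    (sum_normSq_apply_eq_one U i) (fun j _ => Set.mem_univ (hA.eigenvalues j))

theorem IsHermitian.sum_exp_re_diag_le_re_trace_exp {A : Matrix ι ι ℂ} (hA : A.IsHermitian) :
    ∑ i, Real.exp (A i i).re ≤ (NormedSpace.exp A).trace.re := by
  rw [trace, Complex.re_sum]
  exact Finset.sum_le_sum fun i _ => hA.exp_re_apply_self_le i

theorem IsHermitian.re_trace_sub_diagonal_mul_exp_div_le {A : Matrix ι ι ℂ} (hA : A.IsHermitian)
    (d : ι → ℝ) :
    (((A - diagonal fun i => (d i : ℂ)) * NormedSpace.exp (diagonal fun i => (d i : ℂ))).trace /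
        (NormedSpace.exp (diagonal fun i => (d i : ℂ))).trace).re ≤
      Real.log (NormedSpace.exp A).trace.re -
        Real.log (NormedSpace.exp (diagonal fun i => (d i : ℂ))).trace.re := by
  cases isEmpty_or_nonempty ι
  · simp [trace]
  have htrace :
      (diagonal fun i => (Real.exp (d i) : ℂ)).trace = ((∑ i, Real.exp (d i) : ℝ) : ℂ) := by
    rw [trace_diagonal]
    push_cast
    rfl
  have hnum :
      ((A - diagonal fun i => (d i : ℂ)) * diagonal fun i => (Real.exp (d i) : ℂ)).trace.re =
        ∑ i, ((A i i).re - d i) * Real.exp (d i) := by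
    simp only [trace, diag, mul_diagonal, sub_apply, diagonal_apply_eq, Complex.re_sum]
    refine Finset.sum_congr rfl fun i _ => ?_
    rw [Complex.re_mul_ofReal, Complex.sub_re, Complex.ofReal_re]
  rw [exp_diagonal_ofReal, htrace, Complex.div_ofReal_re, hnum, Complex.ofReal_re]
  calc _ ≤ Real.log (∑ i, Real.exp (A i i).re) - Real.log (∑ i, Real.exp (d i)) :=
        Real.sum_sub_mul_exp_div_le_log_sum_exp_sub _ _
    _ ≤ _ := by
        gcongr
        exact hA.sum_exp_re_diag_le_re_trace_exp

theorem IsHermitian.re_trace_sub_mul_exp_div_le {A B : Matrix ι ι ℂ} (hA : A.IsHermitian)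
    (hB : B.IsHermitian) :
    (((A - B) * NormedSpace.exp B).trace / (NormedSpace.exp B).trace).re ≤
      Real.log (NormedSpace.exp A).trace.re - Real.log (NormedSpace.exp B).trace.re := by
  set φ := conjStarAlgAut ℂ (Matrix ι ι ℂ) (star hB.eigenvectorUnitary)
  have hφB : φ B = diagonal fun i => (hB.eigenvalues i : ℂ) :=
    hB.conjStarAlgAut_star_eigenvectorUnitary
  have hφA : (φ A).IsHermitian := hA.isSelfAdjoint.map φ
  have := hφA.re_trace_sub_diagonal_mul_exp_div_le hB.eigenvalues
  rwa [← hφB, ← map_sub, exp_conjStarAlgAut, exp_conjStarAlgAut, ← map_mul, trace_conjStarAlgAut,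
    trace_conjStarAlgAut, trace_conjStarAlgAut] at this

end Matrix

/-- The Bogoliubov convexity inequality for self-adjoint matrices:
`⟨A - B⟩_B ≤ log tr e^A − log tr e^B ≤ ⟨A - B⟩_A`, where `⟨X⟩_C` denotes the
Gibbs expectation `tr(X e^C)/tr(e^C)`. -/
theorem stmt_2 {n : ℕ} (A B : Matrix (Fin n) (Fin n) ℂ)
    (hA : A.IsHermitian) (hB : B.IsHermitian) :
    ((((A - B) * NormedSpace.exp B).trace / (NormedSpace.exp B).trace).re
        ≤ Real.log ((NormedSpace.exp A).trace.re)
            - Real.log ((NormedSpace.exp B).trace.re)) ∧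
    (Real.log ((NormedSpace.exp A).trace.re)
        - Real.log ((NormedSpace.exp B).trace.re)
      ≤ (((A - B) * NormedSpace.exp A).trace / (NormedSpace.exp A).trace).re) := by
  refine ⟨hA.re_trace_sub_mul_exp_div_le hB, ?_⟩
  have h := hB.re_trace_sub_mul_exp_div_le hA
  rw [← neg_sub A B, neg_mul, trace_neg, neg_div, Complex.neg_re] at h
  linarith
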